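/- Work in the Clifford algebra Cl(4,1) of ℝ⁵ with the quadratic form Q(x) = x₁² + x₂² + x₃² + x₄² − x₅², with the conformal embedding F(x) = |x|²·ι(n) + 2λ·ι(x) − λ²·ι(n̄) of ℝ³ for a fixed real λ ≠ 0. For a ∈ ℝ³ define the translation rotor T_a = 1 + (2λ)⁻¹·ι(n)·ι(a); its reverse is T̃_a = 1 − (2λ)⁻¹·ι(n)·ι(a). Then for all a, x ∈ ℝ³, one has T_a · F(x) · T̃_a = F(x + a); that is, the translation x ↦ x + a of ℝ³ is implemented multiplicatively by the rotor T_a on conformal representatives. -/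

import Mathlib

/-!
Write `B = ι(n)ι(a)`, so that `T_a = 1 + cB` and `T̃_a = 1 - cB` with `c = (2λ)⁻¹`, and let
`p` be the polar form of `Q`, so that `uw + wu = p(u, w)` for vectors `u, w`. Then
`T_a v T̃_a = v + c(Bv - vB) - c² BvB`, and since `n` is null and orthogonal to `a`, the
anticommutation relations give `Bv - vB = p(a, v) n - p(n, v) a` and `BvB = p(n, v) Q(a) n`
for every vector `v`. Hence conjugation by `T_a` maps vectors to vectors; on `F(x)`, where
`p(a, F x) = 4λ⟨a, x⟩` and `p(n, F x) = -4λ²`, it adds `2λ a + (2⟨a, x⟩ + |a|²) n`, which is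
`F(x + a) - F(x)`.
-/

noncomputable section

/-- The quadratic form of signature `(4,1)` on ℝ⁵:
`Q(x) = x₁² + x₂² + x₃² + x₄² − x₅²`. -/
def Q41 : QuadraticForm ℝ (Fin 5 → ℝ) :=
  QuadraticMap.weightedSumSquares ℝ (![1, 1, 1, 1, -1] : Fin 5 → ℝ)

/-- The conformal Clifford algebra `Cl(4,1)`. -/
abbrev Cl41 : Type := CliffordAlgebra Q41

/-- The canonical embedding `ι : ℝ⁵ → Cl(4,1)`, satisfying `ι(v)² = Q(v)·1`. -/
def ι41 : (Fin 5 → ℝ) →ₗ[ℝ] Cl41 := CliffordAlgebra.ι Q41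

/-- The embedding of ℝ³ into ℝ⁵ as the first three coordinates. -/
def emb3 (x : Fin 3 → ℝ) : Fin 5 → ℝ := ![x 0, x 1, x 2, 0, 0]

/-- The null vector `n = e₄ + e₅`. -/
def nVec : Fin 5 → ℝ := ![0, 0, 0, 1, 1]

/-- The null vector `n̄ = e₄ − e₅`. -/
def nBar : Fin 5 → ℝ := ![0, 0, 0, 1, -1]

/-- The conformal embedding `F(x) = |x|²·ι(n) + 2λ·ι(x) − λ²·ι(n̄)` of ℝ³
into the null cone of `Cl(4,1)`, for a fixed scale `lam = λ`. -/
def confF (lam : ℝ) (x : Fin 3 → ℝ) : Cl41 :=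
  (∑ i, x i ^ 2) • ι41 nVec + (2 * lam) • ι41 (emb3 x) - lam ^ 2 • ι41 nBar

/-- The translation rotor `T_a = 1 + (2λ)⁻¹·ι(n)·ι(a)`. -/
def transRotor (lam : ℝ) (a : Fin 3 → ℝ) : Cl41 :=
  1 + (2 * lam)⁻¹ • (ι41 nVec * ι41 (emb3 a))

/-- The reverse `T̃_a = 1 − (2λ)⁻¹·ι(n)·ι(a)` of the translation rotor. -/
def transRotorRev (lam : ℝ) (a : Fin 3 → ℝ) : Cl41 :=
  1 - (2 * lam)⁻¹ • (ι41 nVec * ι41 (emb3 a))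

section SandwichExpansion

variable {R A : Type*} [CommRing R] [Ring A] [Algebra R A]

theorem one_add_smul_mul_mul_one_sub_smul (c : R) (B V : A) :
    (1 + c • B) * V * (1 - c • B) = V + c • (B * V - V * B) - c ^ 2 • (B * V * B) := by
  simp only [add_mul, mul_sub, one_mul, mul_one, smul_mul_assoc, mul_smul_comm, smul_sub,
    mul_assoc]
  module

end SandwichExpansion

namespace CliffordAlgebra

open QuadraticMap

variable {R M : Type*} [CommRing R] [AddCommGroup M] [Module R M] {Q : QuadraticForm R M}

theorem ι_mul_ι_swap (u w : M) :
    ι Q w * ι Q u = algebraMap R _ (polar Q u w) - ι Q u * ι Q w := by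
  rw [eq_sub_iff_add_eq, add_comm, ι_mul_ι_add_swap]

theorem ι_mul_ι_mul_ι_sub_ι_mul_ι_mul_ι (n a v : M) :
    ι Q n * ι Q a * ι Q v - ι Q v * (ι Q n * ι Q a) =
      polar Q a v • ι Q n - polar Q n v • ι Q a :=
  calc ι Q n * ι Q a * ι Q v - ι Q v * (ι Q n * ι Q a)
      = ι Q n * (ι Q a * ι Q v + ι Q v * ι Q a) - algebraMap R _ (polar Q n v) * ι Q a := by
        rw [← mul_assoc, ι_mul_ι_swap n v]; noncomm_ring
    _ = _ := by rw [ι_mul_ι_add_swap, ← Algebra.commutes, ← Algebra.smul_def, ← Algebra.smul_def]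

theorem ι_mul_ι_mul_ι_mul_ι_mul_ι_of_isotropic {n a : M} (hn : Q n = 0) (hna : polar Q n a = 0)
    (v : M) :
    ι Q n * ι Q a * ι Q v * (ι Q n * ι Q a) = (polar Q n v * Q a) • ι Q n :=
  calc ι Q n * ι Q a * ι Q v * (ι Q n * ι Q a)
      = ι Q n * ι Q a * algebraMap R _ (polar Q n v) * ι Q a
        - ι Q n * (ι Q a * ι Q n) * ι Q v * ι Q a := by
        rw [← mul_assoc, mul_assoc _ (ι Q v), ι_mul_ι_swap n v]; noncomm_ring
    _ = polar Q n v • (ι Q n * (ι Q a * ι Q a)) := by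
      rw [ι_mul_ι_swap n a, hna, map_zero, zero_sub, mul_neg, ← mul_assoc, ι_sq_scalar, hn,
        map_zero, Algebra.algebraMap_eq_smul_one]
      simp only [zero_mul, neg_zero, sub_zero, mul_smul_comm, smul_mul_assoc, mul_one, mul_assoc]
    _ = _ := by
      rw [ι_sq_scalar, Algebra.algebraMap_eq_smul_one, mul_smul_comm, mul_one, smul_smul]

theorem one_add_smul_ι_mul_ι_mul_ι_mul_one_sub_smul {n a : M} (hn : Q n = 0)
    (hna : polar Q n a = 0) (c : R) (v : M) :
    (1 + c • (ι Q n * ι Q a)) * ι Q v * (1 - c • (ι Q n * ι Q a)) =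
      ι Q (v + (c * polar Q a v) • n - (c * polar Q n v) • a
        - (c ^ 2 * polar Q n v * Q a) • n) := by
  rw [one_add_smul_mul_mul_one_sub_smul, ι_mul_ι_mul_ι_sub_ι_mul_ι_mul_ι,
    ι_mul_ι_mul_ι_mul_ι_mul_ι_of_isotropic hn hna]
  simp only [map_add, map_sub, map_smul, smul_sub, smul_smul]
  module

end CliffordAlgebra

open QuadraticMap

lemma Q41_apply (v : Fin 5 → ℝ) : Q41 v = v 0 ^ 2 + v 1 ^ 2 + v 2 ^ 2 + v 3 ^ 2 - v 4 ^ 2 := by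
  simp [Q41, weightedSumSquares_apply, Fin.sum_univ_five]
  ring

lemma polar_Q41 (u v : Fin 5 → ℝ) :
    polar Q41 u v = 2 * (u 0 * v 0 + u 1 * v 1 + u 2 * v 2 + u 3 * v 3 - u 4 * v 4) := by
  simp only [polar, Q41_apply, Pi.add_apply]
  ring

lemma confF_eq_ι41 (lam : ℝ) (x : Fin 3 → ℝ) :
    confF lam x = ι41 ((∑ i, x i ^ 2) • nVec + (2 * lam) • emb3 x - lam ^ 2 • nBar) := by
  simp only [confF, map_add, map_sub, map_smul]

/-- In `Cl(4,1)`, for all `a, x ∈ ℝ³`, `T_a · F(x) · T̃_a = F(x + a)`: the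
translation `x ↦ x + a` of ℝ³ is implemented multiplicatively by the rotor
`T_a` on conformal representatives. -/
theorem conformal_translation (lam : ℝ) (hlam : lam ≠ 0) (a x : Fin 3 → ℝ) :
    transRotor lam a * confF lam x * transRotorRev lam a = confF lam (x + a) := by
  have hn : Q41 nVec = 0 := by simp [Q41_apply, nVec]
  have hna : polar Q41 nVec (emb3 a) = 0 := by simp [polar_Q41, nVec, emb3]
  rw [transRotor, transRotorRev, confF_eq_ι41, confF_eq_ι41, ι41,
    CliffordAlgebra.one_add_smul_ι_mul_ι_mul_ι_mul_one_sub_smul hn hna]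
  congr 1
  ext i
  fin_cases i <;> simp [polar_Q41, Q41_apply, emb3, nVec, nBar, Fin.sum_univ_three] <;>
    field_simp <;> ring
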